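/- arXiv:2604.10657 — 7 statements merged into one kernel-verified Lean document; each statement's English description precedes it below -/
import Mathlib

section
/- Let Λ : ℝ → [0,1] be decreasing and let ρ : [0,1] → ℝ̄ be a map with ρ(α) increasing in α (playing the role of α ↦ EVaR_α^p(X)). Define ρ_Λ = sup_{x ∈ ℝ} (ρ(Λ(x)) ⊓ x). If ρ(Λ(x⁺)) ≤ x ≤ ρ(Λ(x⁻)) (where Λ(x⁺), Λ(x⁻) denote right and left limits of Λ at x), then ρ_Λ = x. -/
open Filter Topology Set

theorem stmt_0 (Λ : ℝ → ℝ) (hΛ : Antitone Λ) (hΛ01 : ∀ x, Λ x ∈ Set.Icc (0:ℝ) 1)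
    (ρ : ℝ → EReal) (hρ : MonotoneOn ρ (Set.Icc (0:ℝ) 1))
    (x Lm Lp : ℝ) (hLm01 : Lm ∈ Set.Icc (0:ℝ) 1) (hLp01 : Lp ∈ Set.Icc (0:ℝ) 1)
    (hLm : Filter.Tendsto Λ (nhdsWithin x (Set.Iio x)) (nhds Lm))
    (hLp : Filter.Tendsto Λ (nhdsWithin x (Set.Ioi x)) (nhds Lp))
    (h1 : ρ Lp ≤ (x : EReal)) (h2 : (x : EReal) ≤ ρ Lm) :
    (⨆ y : ℝ, min (ρ (Λ y)) ((y : ℝ) : EReal)) = (x : EReal) := by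
  apply le_antisymm
  · apply iSup_le
    intro y
    rcases le_or_gt y x with hy | hy
    · exact le_trans (min_le_right _ _) (by exact_mod_cast hy)
    · -- y > x : Λ y ≤ Lp
      have hle : Λ y ≤ Lp := by
        refine ge_of_tendsto hLp ?_
        filter_upwards [Ioo_mem_nhdsGT_of_mem (left_mem_Ico.2 hy)] with z hz
        exact hΛ (le_of_lt hz.2)
      exact le_trans (min_le_left _ _)
        (le_trans (hρ (hΛ01 y) hLp01 hle) h1)
  · refine le_of_forall_lt fun c hc => ?_
    obtain ⟨z, hcz, hzx⟩ := EReal.exists_between_coe_real hc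
    have hzx' : z < x := by exact_mod_cast hzx
    have hle : Lm ≤ Λ z := by
      refine le_of_tendsto hLm ?_
      filter_upwards [Ioo_mem_nhdsLT_of_mem (right_mem_Ioc.2 hzx')] with w hw
      exact hΛ (le_of_lt hw.1)
    have hz : (z : EReal) ≤ min (ρ (Λ z)) ((z : ℝ) : EReal) :=
      le_min (le_trans (le_trans (by exact_mod_cast hzx'.le) h2)
        (hρ hLm01 (hΛ01 z) hle)) le_rfl
    exact lt_of_lt_of_le hcz (hz.trans (le_iSup (fun y : ℝ => min (ρ (Λ y)) ((y : ℝ) : EReal)) z))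
end

section
/- Let Λ : ℝ → [0,1] be decreasing and ρ : [0,1] → ℝ̄ be increasing, and suppose sup_{x ∈ ℝ} (ρ(Λ(x)) ⊓ x) is a real number. Then sup_{x ∈ ℝ} (ρ(Λ(x)) ⊓ x) = inf_{x ∈ ℝ} (ρ(Λ(x)) ⊔ x), i.e., the Lambda risk measure admits the equivalent infimum representation. -/
open Set

theorem stmt_2 (Λ : ℝ → ℝ) (hΛ : Antitone Λ) (hΛ01 : ∀ x, Λ x ∈ Set.Icc (0:ℝ) 1)
    (ρ : ℝ → EReal) (hρ : MonotoneOn ρ (Set.Icc (0:ℝ) 1))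
    (hfin : ∃ r : ℝ, (⨆ x : ℝ, min (ρ (Λ x)) ((x : ℝ) : EReal)) = (r : EReal)) :
    (⨆ x : ℝ, min (ρ (Λ x)) ((x : ℝ) : EReal)) =
      ⨅ x : ℝ, max (ρ (Λ x)) ((x : ℝ) : EReal) := by
  obtain ⟨r, hr⟩ := hfin
  have hf : ∀ ⦃x y : ℝ⦄, x ≤ y → ρ (Λ y) ≤ ρ (Λ x) := fun x y hxy =>
    hρ (hΛ01 y) (hΛ01 x) (hΛ hxy)
  have hle : (⨆ x : ℝ, min (ρ (Λ x)) ((x:ℝ):EReal)) ≤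
      ⨅ x : ℝ, max (ρ (Λ x)) ((x:ℝ):EReal) := by
    refine iSup_le fun x => le_iInf fun y => ?_
    rcases le_total x y with h | h
    · exact le_trans (min_le_right _ _) (le_max_of_le_right (by exact_mod_cast h))
    · exact le_trans (min_le_left _ _) (le_max_of_le_left (hf h))
  refine le_antisymm hle ?_
  rw [hr]
  by_contra hlt
  push_neg at hlt
  obtain ⟨c, hc1, hc2⟩ := EReal.exists_between_coe_real hlt
  have h1 : min (ρ (Λ c)) ((c:ℝ):EReal) ≤ (r : EReal) :=
    hr ▸ le_iSup (fun x => min (ρ (Λ x)) ((x:ℝ):EReal)) c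
  have hfc : ρ (Λ c) ≤ (r:EReal) := by
    rcases min_le_iff.mp h1 with h | h
    · exact h
    · exact absurd h (not_le_of_gt hc1)
  have hmax : (⨅ x : ℝ, max (ρ (Λ x)) ((x:ℝ):EReal)) ≤ (c : EReal) :=
    le_trans (iInf_le _ c) (le_of_eq (max_eq_right (hfc.trans hc1.le)))
  exact absurd hmax (not_le_of_gt hc2)
end

section
/- For p ≥ 1, α ∈ [0,1), and p-integrable random variables X, Y, the functional EVaR_α^p(X) := inf_{t ∈ ℝ} { t + (1/(1-α))^{1/p} · ‖(X-t)⁺‖_p } is subadditive: EVaR_α^p(X+Y) ≤ EVaR_α^p(X) + EVaR_α^p(Y). -/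
open MeasureTheory

/-- The Rényi entropic value-at-risk of order `p` at level `α`, in its
Rockafellar–Uryasev primal form. -/
noncomputable def EVaR {Ω : Type*} [MeasurableSpace Ω] (μ : Measure Ω)
    (p α : ℝ) (X : Ω → ℝ) : ℝ :=
  ⨅ t : ℝ, (t + (1 / (1 - α)) ^ (1 / p) * (∫ ω, (max (X ω - t) 0) ^ p ∂μ) ^ (1 / p))

/-! The objective `t + c ‖(X - t)⁺‖_p` is bounded below by `E X` once `c ≥ 1`, and is jointly
subadditive in `(X, t)` because `(X + Y - (s + t))⁺ ≤ (X - s)⁺ + (Y - t)⁺` and the `L^p` norm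
obeys Minkowski's inequality. Taking infima over `s` and `t` separately gives subadditivity. -/

namespace EVaR

variable {Ω : Type*} [MeasurableSpace Ω] {μ : Measure Ω} {p : ℝ}

noncomputable def excessNorm (μ : Measure Ω) (p : ℝ) (Z : Ω → ℝ) (t : ℝ) : ℝ :=
  (∫ ω, (max (Z ω - t) 0) ^ p ∂μ) ^ (1 / p)

lemma EVaR_eq_iInf_excessNorm (α : ℝ) (Z : Ω → ℝ) :
    EVaR μ p α Z = ⨅ t, t + (1 / (1 - α)) ^ (1 / p) * excessNorm μ p Z t :=
  rfl

lemma excessNorm_nonneg (Z : Ω → ℝ) (t : ℝ) : 0 ≤ excessNorm μ p Z t := by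
  unfold excessNorm; positivity

lemma memLp_max_sub_const_zero [IsFiniteMeasure μ] {q : ENNReal} {Z : Ω → ℝ}
    (hZ : MemLp Z q μ) (t : ℝ) : MemLp (fun ω => max (Z ω - t) 0) q μ :=
  (hZ.sub (memLp_const t)).pos_part

lemma excessNorm_eq_toReal_eLpNorm [IsFiniteMeasure μ] (hp : 0 < p) {Z : Ω → ℝ}
    (hZ : MemLp Z (ENNReal.ofReal p) μ) (t : ℝ) :
    excessNorm μ p Z t = (eLpNorm (fun ω => max (Z ω - t) 0) (ENNReal.ofReal p) μ).toReal := by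
  rw [(memLp_max_sub_const_zero hZ t).eLpNorm_eq_integral_rpow_norm
      (by simpa using hp) ENNReal.ofReal_ne_top,
    ENNReal.toReal_ofReal (by positivity), ENNReal.toReal_ofReal hp.le, excessNorm, one_div]
  simp only [Real.norm_of_nonneg (le_max_right _ (0 : ℝ))]

lemma excessNorm_add_add_le [IsFiniteMeasure μ] (hp : 1 ≤ p) {X Y : Ω → ℝ}
    (hX : MemLp X (ENNReal.ofReal p) μ) (hY : MemLp Y (ENNReal.ofReal p) μ) (s t : ℝ) :
    excessNorm μ p (fun ω => X ω + Y ω) (s + t) ≤ excessNorm μ p X s + excessNorm μ p Y t := by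
  have hp0 : 0 < p := by linarith
  have hXs := memLp_max_sub_const_zero hX s
  have hYt := memLp_max_sub_const_zero hY t
  have hpointwise : ∀ ω, ‖max (X ω + Y ω - (s + t)) 0‖ ≤ max (X ω - s) 0 + max (Y ω - t) 0 :=
    fun ω => by
      rw [Real.norm_of_nonneg (le_max_right _ _)]
      exact max_le (by linarith [le_max_left (X ω - s) 0, le_max_left (Y ω - t) 0])
        (by positivity)
  have hXY : MemLp (fun ω => X ω + Y ω) (ENNReal.ofReal p) μ := hX.add hY
  rw [excessNorm_eq_toReal_eLpNorm hp0 hXY, excessNorm_eq_toReal_eLpNorm hp0 hX,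
    excessNorm_eq_toReal_eLpNorm hp0 hY, ← ENNReal.toReal_add hXs.2.ne hYt.2.ne]
  refine ENNReal.toReal_mono (ENNReal.add_ne_top.mpr ⟨hXs.2.ne, hYt.2.ne⟩) ?_
  calc eLpNorm (fun ω => max (X ω + Y ω - (s + t)) 0) (ENNReal.ofReal p) μ
      ≤ eLpNorm (fun ω => max (X ω - s) 0 + max (Y ω - t) 0) (ENNReal.ofReal p) μ :=
        eLpNorm_mono_real hpointwise
    _ ≤ _ := eLpNorm_add_le hXs.aestronglyMeasurable hYt.aestronglyMeasurable
        (by simpa using ENNReal.ofReal_le_ofReal hp)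

lemma integral_le_add_excessNorm [IsProbabilityMeasure μ] (hp : 1 ≤ p) {Z : Ω → ℝ}
    (hZ : MemLp Z (ENNReal.ofReal p) μ) (t : ℝ) :
    ∫ ω, Z ω ∂μ ≤ t + excessNorm μ p Z t := by
  have h1p : (1 : ENNReal) ≤ ENNReal.ofReal p := by simpa using ENNReal.ofReal_le_ofReal hp
  have hg : MemLp (fun ω => max (Z ω - t) 0) (ENNReal.ofReal p) μ :=
    memLp_max_sub_const_zero hZ t
  have hg_int : Integrable (fun ω => max (Z ω - t) 0) μ := hg.integrable h1p
  have hZ_le : ∫ ω, Z ω ∂μ ≤ t + ∫ ω, max (Z ω - t) 0 ∂μ :=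
    calc ∫ ω, Z ω ∂μ ≤ ∫ ω, (t + max (Z ω - t) 0) ∂μ :=
          integral_mono (hZ.integrable h1p) ((integrable_const t).add hg_int)
            fun ω => by linarith [le_max_left (Z ω - t) 0]
      _ = t + ∫ ω, max (Z ω - t) 0 ∂μ := by
          rw [integral_add (integrable_const t) hg_int, integral_const]; simp
  have hL1 : ∫ ω, max (Z ω - t) 0 ∂μ = (eLpNorm (fun ω => max (Z ω - t) 0) 1 μ).toReal := by
    rw [← ENNReal.ofReal_one,
      ← excessNorm_eq_toReal_eLpNorm one_pos (hZ.mono_exponent (by simpa using h1p))]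
    simp [excessNorm]
  have hL1_le : (eLpNorm (fun ω => max (Z ω - t) 0) 1 μ).toReal ≤ excessNorm μ p Z t := by
    rw [excessNorm_eq_toReal_eLpNorm (by linarith) hZ]
    exact ENNReal.toReal_mono hg.2.ne
      (eLpNorm_le_eLpNorm_of_exponent_le h1p hg.aestronglyMeasurable)
  linarith

lemma bddBelow_range_add_mul_excessNorm [IsProbabilityMeasure μ] (hp : 1 ≤ p) {c : ℝ}
    (hc : 1 ≤ c) {Z : Ω → ℝ} (hZ : MemLp Z (ENNReal.ofReal p) μ) :
    BddBelow (Set.range fun t => t + c * excessNorm μ p Z t) := by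
  refine ⟨∫ ω, Z ω ∂μ, Set.forall_mem_range.2 fun t => ?_⟩
  have hle := integral_le_add_excessNorm hp hZ t
  have hmul := le_mul_of_one_le_left (excessNorm_nonneg (μ := μ) (p := p) Z t) hc
  linarith

lemma add_mul_excessNorm_add_add_le [IsFiniteMeasure μ] (hp : 1 ≤ p) {c : ℝ} (hc : 0 ≤ c)
    {X Y : Ω → ℝ} (hX : MemLp X (ENNReal.ofReal p) μ) (hY : MemLp Y (ENNReal.ofReal p) μ)
    (s t : ℝ) :
    (s + t) + c * excessNorm μ p (fun ω => X ω + Y ω) (s + t)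
      ≤ (s + c * excessNorm μ p X s) + (t + c * excessNorm μ p Y t) := by
  have := mul_le_mul_of_nonneg_left (excessNorm_add_add_le hp hX hY s t) hc
  linarith

end EVaR

open EVaR in
theorem stmt_5 {Ω : Type*} [MeasurableSpace Ω] (μ : Measure Ω) [IsProbabilityMeasure μ]
    (p : ℝ) (hp : 1 ≤ p) (α : ℝ) (hα : α ∈ Set.Ico (0:ℝ) 1)
    (X Y : Ω → ℝ) (hX : MemLp X (ENNReal.ofReal p) μ) (hY : MemLp Y (ENNReal.ofReal p) μ) :
    EVaR μ p α (fun ω => X ω + Y ω) ≤ EVaR μ p α X + EVaR μ p α Y := by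
  have hc : 1 ≤ (1 / (1 - α)) ^ (1 / p) :=
    Real.one_le_rpow (by rw [le_div_iff₀ (by linarith [hα.2])]; linarith [hα.1]) (by positivity)
  simp only [EVaR_eq_iInf_excessNorm]
  exact le_ciInf_add_ciInf fun s t =>
    (ciInf_le (bddBelow_range_add_mul_excessNorm hp hc (hX.add hY)) (s + t)).trans
      (add_mul_excessNorm_add_add_le hp (by positivity) hX hY s t)
end

section
/- Let Λ : ℝ → [0,1] be decreasing and let ρ_α (α ∈ [0,1]) be a family of functionals on L^p satisfying cash additivity: ρ_α(X+m) = ρ_α(X)+m for all m ∈ ℝ. Then the Lambda functional ρ_Λ(X) := sup_{x ∈ ℝ}(ρ_{Λ(x)}(X) ⊓ x) is cash subadditive: ρ_Λ(X + c) ≤ ρ_Λ(X) + c for all c ≥ 0. -/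
open MeasureTheory

theorem min_add_le_min_add {a x c : ℝ} (hc : 0 ≤ c) : min (a + c) x ≤ min a x + c :=
  calc min (a + c) x ≤ min (a + c) (x + c) := min_le_min_left _ (le_add_of_nonneg_right hc)
    _ = min a x + c := min_add_add_right a x c

theorem EReal.coe_min (a b : ℝ) : ((min a b : ℝ) : EReal) = min (a : EReal) (b : EReal) :=
  EReal.coe_strictMono.monotone.map_min

theorem EReal.iSup_coe_le_iSup_coe_add {ι : Sort*} {f g : ι → ℝ} {c : ℝ}
    (h : ∀ i, f i ≤ g i + c) : ⨆ i, (f i : EReal) ≤ (⨆ i, (g i : EReal)) + c :=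
  iSup_le fun i => calc
    (f i : EReal) ≤ (g i : EReal) + c := by exact_mod_cast h i
    _ ≤ (⨆ j, (g j : EReal)) + c := add_le_add_left (le_iSup (fun j => (g j : EReal)) i) _

theorem stmt_8_general {Ω : Type*}
    (ρ : ℝ → (Ω → ℝ) → ℝ)
    (hcash : ∀ a ∈ Set.Icc (0:ℝ) 1, ∀ (X : Ω → ℝ) (m : ℝ),
      ρ a (fun ω => X ω + m) = ρ a X + m)
    (Λ : ℝ → ℝ) (hΛ01 : ∀ x, Λ x ∈ Set.Icc (0:ℝ) 1)
    (X : Ω → ℝ)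
    (c : ℝ) (hc : 0 ≤ c) :
    (⨆ x : ℝ, min ((ρ (Λ x) (fun ω => X ω + c) : ℝ) : EReal) ((x : ℝ) : EReal)) ≤
      (⨆ x : ℝ, min ((ρ (Λ x) X : ℝ) : EReal) ((x : ℝ) : EReal)) + (c : EReal) := by
  simp only [← EReal.coe_min]
  refine EReal.iSup_coe_le_iSup_coe_add fun x => ?_
  rw [hcash _ (hΛ01 x)]
  exact min_add_le_min_add hc

theorem stmt_8 {Ω : Type*} [MeasurableSpace Ω] (μ : Measure Ω) [IsProbabilityMeasure μ]
    (p : ℝ) (hp : 1 ≤ p)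
    (ρ : ℝ → (Ω → ℝ) → ℝ)
    (hcash : ∀ a ∈ Set.Icc (0:ℝ) 1, ∀ (X : Ω → ℝ) (m : ℝ),
      ρ a (fun ω => X ω + m) = ρ a X + m)
    (Λ : ℝ → ℝ) (hΛ : Antitone Λ) (hΛ01 : ∀ x, Λ x ∈ Set.Icc (0:ℝ) 1)
    (X : Ω → ℝ) (hX : MemLp X (ENNReal.ofReal p) μ)
    (c : ℝ) (hc : 0 ≤ c) :
    (⨆ x : ℝ, min ((ρ (Λ x) (fun ω => X ω + c) : ℝ) : EReal) ((x : ℝ) : EReal)) ≤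
      (⨆ x : ℝ, min ((ρ (Λ x) X : ℝ) : EReal) ((x : ℝ) : EReal)) + (c : EReal) :=
  stmt_8_general ρ hcash Λ hΛ01 X c hc
end

section
/- Let p ≥ 1, α ∈ [0,1), and let X, Y ∈ L^p be random variables (on possibly the same probability space) with Wasserstein-p distance W_p(X,Y) ≤ δ. Then EVaR_α^p(Y) ≤ EVaR_α^p(X) + δ(1-α)^{-1/p}, where EVaR_α^p(Z) = inf_{t ∈ ℝ}{ t + (1/(1-α))^{1/p} ‖(Z-t)⁺‖_p }. -/
open MeasureTheory

/-!
The objective `t + c ‖(Z - t)⁺‖_p` of `EVaR` depends only on the law of `Z`, and for fixed `t`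
it is `c`-Lipschitz in `Z ∈ Lᵖ`, since `z ↦ (z - t)⁺` is `1`-Lipschitz and Minkowski's
inequality holds. Hence `EVaR(Y) ≤ EVaR(X) + c ‖X' - Y'‖_p` for any copies `X'`, `Y'` of `X`, `Y`,
and letting `‖X' - Y'‖_p` approach `W_p(X, Y) ≤ δ` gives the bound.
-/

namespace MeasureTheory

variable {Ω : Type*} [MeasurableSpace Ω] {μ : Measure Ω}

lemma lpNorm_ofReal_eq_integral_abs_rpow {p : ℝ} (hp : 0 < p) {f : Ω → ℝ}
    (hf : AEStronglyMeasurable f μ) :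
    lpNorm f (ENNReal.ofReal p) μ = (∫ ω, |f ω| ^ p ∂μ) ^ (1 / p) := by
  rw [lpNorm_eq_integral_norm_rpow_toReal (by simpa using hp) ENNReal.ofReal_ne_top hf,
    ENNReal.toReal_ofReal hp.le, one_div]
  rfl

lemma integral_norm_le_lpNorm [IsProbabilityMeasure μ] {p : ENNReal} (hp : 1 ≤ p)
    {f : Ω → ℝ} (hf : MemLp f p μ) :
    ∫ ω, ‖f ω‖ ∂μ ≤ lpNorm f p μ := by
  rw [← lpNorm_one_eq_integral_norm hf.1, ← toReal_eLpNorm hf.1, ← toReal_eLpNorm hf.1]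
  exact ENNReal.toReal_mono hf.eLpNorm_ne_top (eLpNorm_le_eLpNorm_of_exponent_le hp hf.1)

lemma lpNorm_max_sub_le [IsFiniteMeasure μ] {p : ENNReal} (hp : 1 ≤ p) {X Y : Ω → ℝ}
    (hX : MemLp X p μ) (hY : MemLp Y p μ) (t : ℝ) :
    lpNorm (fun ω ↦ max (Y ω - t) 0) p μ ≤
      lpNorm (fun ω ↦ max (X ω - t) 0) p μ + lpNorm (X - Y) p μ := by
  have hXt : MemLp (fun ω ↦ max (X ω - t) 0) p μ := (hX.sub (memLp_const t)).pos_part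
  grw [lpNorm_le_lpNorm_add_lpNorm_sub' hXt hp]
  gcongr
  rw [← lpNorm_fun_abs (hX.sub hY).1]
  refine lpNorm_mono_real (hX.sub hY).abs fun ω ↦ ?_
  simpa [Real.norm_eq_abs, abs_sub_comm] using abs_max_sub_max_le_abs (Y ω - t) (X ω - t) 0

end MeasureTheory

section EVaR

variable {Ω : Type*} [MeasurableSpace Ω] {μ : Measure Ω} {p α : ℝ}

lemma EVaR_eq_iInf_lpNorm (hp : 0 < p) {Z : Ω → ℝ} (hZ : AEStronglyMeasurable Z μ) :
    EVaR μ p α Z =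
      ⨅ t : ℝ, t + (1 / (1 - α)) ^ (1 / p) *
        lpNorm (fun ω ↦ max (Z ω - t) 0) (ENNReal.ofReal p) μ := by
  refine iInf_congr fun t ↦ ?_
  have hZt : AEStronglyMeasurable (fun ω ↦ max (Z ω - t) 0) μ :=
    (hZ.sub aestronglyMeasurable_const).sup aestronglyMeasurable_const
  have habs (ω : Ω) : |max (Z ω - t) 0| = max (Z ω - t) 0 := abs_of_nonneg (le_max_right _ _)
  simp_rw [lpNorm_ofReal_eq_integral_abs_rpow hp hZt, habs]

lemma bddBelow_range_add_mul_lpNorm_max_sub [IsProbabilityMeasure μ] (hp : 1 ≤ p) {c : ℝ}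
    (hc : 1 ≤ c) {Z : Ω → ℝ} (hZ : MemLp Z (ENNReal.ofReal p) μ) :
    BddBelow (Set.range fun t : ℝ ↦
      t + c * lpNorm (fun ω ↦ max (Z ω - t) 0) (ENNReal.ofReal p) μ) := by
  have hp' : 1 ≤ ENNReal.ofReal p := by simpa using ENNReal.ofReal_le_ofReal hp
  refine ⟨∫ ω, Z ω ∂μ, ?_⟩
  rintro _ ⟨t, rfl⟩
  dsimp only
  have hZt : MemLp (fun ω ↦ max (Z ω - t) 0) (ENNReal.ofReal p) μ :=
    (hZ.sub (memLp_const t)).pos_part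
  have hmean : ∫ ω, Z ω ∂μ - t ≤ ∫ ω, ‖max (Z ω - t) 0‖ ∂μ := by
    have hZi := hZ.integrable hp'
    calc ∫ ω, Z ω ∂μ - t = ∫ ω, (Z ω - t) ∂μ := by
          rw [integral_sub hZi (integrable_const t)]; simp
      _ ≤ ∫ ω, ‖max (Z ω - t) 0‖ ∂μ :=
          integral_mono (hZi.sub (integrable_const t)) (hZt.integrable hp').norm
            fun ω ↦ (le_max_left _ _).trans (le_abs_self _)
  nlinarith [integral_norm_le_lpNorm hp' hZt, lpNorm_nonneg (f := fun ω ↦ max (Z ω - t) 0)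
    (p := ENNReal.ofReal p) (μ := μ)]

lemma EVaR_le_EVaR_add_mul_lpNorm [IsProbabilityMeasure μ] (hp : 1 ≤ p)
    (hα : α ∈ Set.Ico (0 : ℝ) 1) {X Y : Ω → ℝ} (hX : MemLp X (ENNReal.ofReal p) μ)
    (hY : MemLp Y (ENNReal.ofReal p) μ) :
    EVaR μ p α Y ≤
      EVaR μ p α X + (1 / (1 - α)) ^ (1 / p) * lpNorm (X - Y) (ENNReal.ofReal p) μ := by
  have hp0 : 0 < p := by linarith
  have hp' : 1 ≤ ENNReal.ofReal p := by simpa using ENNReal.ofReal_le_ofReal hp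
  have hc : 1 ≤ (1 / (1 - α)) ^ (1 / p) :=
    Real.one_le_rpow (by rw [le_div_iff₀ (by linarith [hα.2])]; linarith [hα.1]) (by positivity)
  rw [EVaR_eq_iInf_lpNorm hp0 hY.1, EVaR_eq_iInf_lpNorm hp0 hX.1, ← sub_le_iff_le_add]
  refine le_ciInf fun t ↦ sub_le_iff_le_add.2 ?_
  calc _ ≤ t + (1 / (1 - α)) ^ (1 / p) *
          lpNorm (fun ω ↦ max (Y ω - t) 0) (ENNReal.ofReal p) μ :=
        ciInf_le (bddBelow_range_add_mul_lpNorm_max_sub hp hc hY) t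
    _ ≤ t + (1 / (1 - α)) ^ (1 / p) * (lpNorm (fun ω ↦ max (X ω - t) 0) (ENNReal.ofReal p) μ +
          lpNorm (X - Y) (ENNReal.ofReal p) μ) := by
        gcongr
        exact lpNorm_max_sub_le hp' hX hY t
    _ = _ := by ring

lemma ProbabilityTheory.IdentDistrib.EVaR_eq {X Y : Ω → ℝ}
    (h : ProbabilityTheory.IdentDistrib X Y μ μ) : EVaR μ p α X = EVaR μ p α Y := by
  refine iInf_congr fun t ↦ ?_
  have h_eq := (h.comp (u := fun z : ℝ ↦ max (z - t) 0 ^ p) (by fun_prop)).integral_eq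
  simp only [Function.comp_def] at h_eq
  rw [h_eq]

end EVaR

theorem stmt_10_general {Ω : Type*} [MeasurableSpace Ω] (μ : Measure Ω) [IsProbabilityMeasure μ]
    (p : ℝ) (hp : 1 ≤ p) (α : ℝ) (hα : α ∈ Set.Ico (0:ℝ) 1) (δ : ℝ)
    (X Y : Ω → ℝ) (hX : MemLp X (ENNReal.ofReal p) μ) (hY : MemLp Y (ENNReal.ofReal p) μ)
    (hW : ∀ ε > (0:ℝ), ∃ X' Y' : Ω → ℝ,
        MemLp X' (ENNReal.ofReal p) μ ∧ MemLp Y' (ENNReal.ofReal p) μ ∧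
        μ.map X' = μ.map X ∧ μ.map Y' = μ.map Y ∧
        (∫ ω, |X' ω - Y' ω| ^ p ∂μ) ^ (1 / p) ≤ δ + ε) :
    EVaR μ p α Y ≤ EVaR μ p α X + δ * (1 - α) ^ (-(1 / p)) := by
  have h1α : 0 < 1 - α := by linarith [hα.2]
  have hc : (1 - α) ^ (-(1 / p)) = (1 / (1 - α)) ^ (1 / p) := by
    rw [Real.rpow_neg h1α.le, one_div (1 - α), Real.inv_rpow h1α.le]
  set c := (1 / (1 - α)) ^ (1 / p)
  have hc0 : 0 < c := Real.rpow_pos_of_pos (by positivity) _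
  refine le_of_forall_pos_le_add fun ε hε ↦ ?_
  obtain ⟨X', Y', hX', hY', hXX', hYY', hdist⟩ := hW (ε / c) (by positivity)
  have hXd : ProbabilityTheory.IdentDistrib X' X μ μ :=
    ⟨hX'.1.aemeasurable, hX.1.aemeasurable, hXX'⟩
  have hYd : ProbabilityTheory.IdentDistrib Y' Y μ μ :=
    ⟨hY'.1.aemeasurable, hY.1.aemeasurable, hYY'⟩
  have hlpNorm : lpNorm (X' - Y') (ENNReal.ofReal p) μ ≤ δ + ε / c := by
    rw [lpNorm_ofReal_eq_integral_abs_rpow (by linarith) (hX'.sub hY').1]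
    exact hdist
  calc EVaR μ p α Y = EVaR μ p α Y' := hYd.EVaR_eq.symm
    _ ≤ EVaR μ p α X' + c * lpNorm (X' - Y') (ENNReal.ofReal p) μ :=
        EVaR_le_EVaR_add_mul_lpNorm hp hα hX' hY'
    _ ≤ EVaR μ p α X + c * (δ + ε / c) := by rw [hXd.EVaR_eq]; gcongr
    _ = EVaR μ p α X + δ * (1 - α) ^ (-(1 / p)) + ε := by
        rw [hc]; field_simp; ring

theorem stmt_10 {Ω : Type*} [MeasurableSpace Ω] (μ : Measure Ω) [IsProbabilityMeasure μ]
    (p : ℝ) (hp : 1 ≤ p) (α : ℝ) (hα : α ∈ Set.Ico (0:ℝ) 1) (δ : ℝ) (hδ : 0 ≤ δ)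
    (X Y : Ω → ℝ) (hX : MemLp X (ENNReal.ofReal p) μ) (hY : MemLp Y (ENNReal.ofReal p) μ)
    (hW : ∀ ε > (0:ℝ), ∃ X' Y' : Ω → ℝ,
        MemLp X' (ENNReal.ofReal p) μ ∧ MemLp Y' (ENNReal.ofReal p) μ ∧
        μ.map X' = μ.map X ∧ μ.map Y' = μ.map Y ∧
        (∫ ω, |X' ω - Y' ω| ^ p ∂μ) ^ (1 / p) ≤ δ + ε) :
    EVaR μ p α Y ≤ EVaR μ p α X + δ * (1 - α) ^ (-(1 / p)) :=
  stmt_10_general μ p hp α hα δ X Y hX hY hW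
end

section
/- Let X be a square-integrable random variable with E[X] = m and Var(X) ≤ v². Then for every α ∈ [0,1), EVaR_α^2(X) := inf_{t ∈ ℝ}{ t + (1-α)^{-1/2} (E[((X-t)⁺)²])^{1/2} } ≤ m + v·α^{1/2}(1-α)^{-1/2}. -/
/-!
Since `E[((X - t)⁺)²] ≤ E[(X - t)²] = Var X + (m - t)² ≤ v² + (m - t)²`, the infimum is at most
that of `t + (1 - α)^(-1/2) √(v² + (m - t)²)`, an elementary function minimised at
`t = m - v √((1 - α) / α)`, and approaching its infimum `m` as `t → -∞` when `α = 0`.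
The infimum over `t` is a genuine one (not the junk value `0` of an unbounded set), because
`√E[((X - t)⁺)²] ≥ E[(X - t)⁺] ≥ m - t` bounds every term below by `m`.
-/

open MeasureTheory

namespace MeasureTheory

variable {Ω : Type*} [MeasurableSpace Ω] {μ : Measure Ω} [IsProbabilityMeasure μ] {Y : Ω → ℝ}
  {m : ℝ}

lemma integral_le_sqrt_integral_sq (hY : MemLp Y 2 μ) : ∫ ω, Y ω ∂μ ≤ √(∫ ω, Y ω ^ 2 ∂μ) := by
  refine Real.le_sqrt_of_sq_le ?_
  have h := ProbabilityTheory.variance_nonneg Y μ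
  rw [ProbabilityTheory.variance_eq_sub hY, sub_nonneg] at h
  simpa only [Pi.pow_apply] using h

lemma integral_sub_const_sq (hY : MemLp Y 2 μ) (hm : ∫ ω, Y ω ∂μ = m) (t : ℝ) :
    ∫ ω, (Y ω - t) ^ 2 ∂μ = ∫ ω, (Y ω - m) ^ 2 ∂μ + (m - t) ^ 2 := by
  subst hm
  have h := ProbabilityTheory.variance_eq_sub (X := fun ω ↦ Y ω - t) (hY.sub (memLp_const t))
  rw [ProbabilityTheory.variance_sub_const hY.aestronglyMeasurable,
    ProbabilityTheory.variance_eq_integral hY.aemeasurable,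
    integral_sub (hY.integrable one_le_two) (integrable_const t)] at h
  simp only [Pi.pow_apply, integral_const, probReal_univ, smul_eq_mul, one_mul] at h
  linarith

lemma integral_max_sub_sq_le (hY : MemLp Y 2 μ) (hm : ∫ ω, Y ω ∂μ = m) (t : ℝ) :
    ∫ ω, max (Y ω - t) 0 ^ 2 ∂μ ≤ ∫ ω, (Y ω - m) ^ 2 ∂μ + (m - t) ^ 2 := by
  have hYt : MemLp (fun ω ↦ Y ω - t) 2 μ := hY.sub (memLp_const t)
  rw [← integral_sub_const_sq hY hm t]
  refine integral_mono hYt.pos_part.integrable_sq hYt.integrable_sq fun ω ↦ ?_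
  rcases le_total (Y ω - t) 0 with h | h <;> simp [h, sq_nonneg]

lemma sub_le_sqrt_integral_max_sub_sq (hY : MemLp Y 2 μ) (hm : ∫ ω, Y ω ∂μ = m) (t : ℝ) :
    m - t ≤ √(∫ ω, max (Y ω - t) 0 ^ 2 ∂μ) := by
  have hYt : MemLp (fun ω ↦ Y ω - t) 2 μ := hY.sub (memLp_const t)
  calc m - t = ∫ ω, (Y ω - t) ∂μ := by
        rw [integral_sub (hY.integrable one_le_two) (integrable_const t), hm]; simp
    _ ≤ ∫ ω, max (Y ω - t) 0 ∂μ :=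
        integral_mono (hYt.integrable one_le_two) (hYt.pos_part.integrable one_le_two)
          fun ω ↦ le_max_left _ _
    _ ≤ _ := integral_le_sqrt_integral_sq hYt.pos_part

end MeasureTheory

namespace Real

lemma exists_sqrt_sq_add_sq_sub_le (v : ℝ) {ε : ℝ} (hε : 0 < ε) :
    ∃ d, √(v ^ 2 + d ^ 2) - d ≤ ε := by
  refine ⟨v ^ 2 / (2 * ε), ?_⟩
  rw [sub_le_iff_le_add, sqrt_le_left (by positivity)]
  field_simp
  nlinarith [sq_nonneg (v ^ 2), sq_nonneg ε]

lemma inv_sqrt_mul_sqrt_sq_add_sq_sub_eq {v α : ℝ} (hv : 0 ≤ v) (hα0 : 0 < α) (hα1 : α < 1) :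
    (√(1 - α))⁻¹ * √(v ^ 2 + (v * √(1 - α) / √α) ^ 2) - v * √(1 - α) / √α =
      v * √α * (√(1 - α))⁻¹ := by
  have hs : 0 < √(1 - α) := sqrt_pos.2 (by linarith)
  have ha : 0 < √α := sqrt_pos.2 hα0
  have hs2 : √(1 - α) ^ 2 = 1 - α := sq_sqrt (by linarith)
  have ha2 : √α ^ 2 = α := sq_sqrt hα0.le
  have hroot : v ^ 2 + (v * √(1 - α) / √α) ^ 2 = (v / √α) ^ 2 := by
    field_simp; linear_combination v ^ 2 * hs2 + v ^ 2 * ha2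
  rw [hroot, sqrt_sq (by positivity)]
  field_simp; linear_combination -v * ha2 - v * hs2

lemma exists_add_inv_sqrt_mul_sqrt_sq_add_sq_le (m : ℝ) {v α ε : ℝ} (hv : 0 ≤ v)
    (hα0 : 0 ≤ α) (hα1 : α < 1) (hε : 0 < ε) :
    ∃ t, t + (√(1 - α))⁻¹ * √(v ^ 2 + (m - t) ^ 2) ≤ m + v * √α * (√(1 - α))⁻¹ + ε := by
  suffices ∃ d, (√(1 - α))⁻¹ * √(v ^ 2 + d ^ 2) - d ≤ v * √α * (√(1 - α))⁻¹ + ε by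
    obtain ⟨d, hd⟩ := this
    exact ⟨m - d, by rw [sub_sub_cancel]; linarith⟩
  rcases hα0.eq_or_lt with rfl | hα0
  · simpa using exists_sqrt_sq_add_sq_sub_le v hε
  · exact ⟨_, (inv_sqrt_mul_sqrt_sq_add_sq_sub_eq hv hα0 hα1).le.trans
      (le_add_of_nonneg_right hε.le)⟩

end Real

theorem stmt_11 {Ω : Type*} [MeasurableSpace Ω] (μ : Measure Ω) [IsProbabilityMeasure μ]
    (X : Ω → ℝ) (hX : MemLp X 2 μ) (m v α : ℝ) (hv : 0 ≤ v)
    (hm : ∫ ω, X ω ∂μ = m) (hvar : ∫ ω, (X ω - m) ^ 2 ∂μ ≤ v ^ 2)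
    (hα : α ∈ Set.Ico (0:ℝ) 1) :
    (⨅ t : ℝ, (t + (1 - α) ^ (-(1/2 : ℝ)) *
        (∫ ω, (max (X ω - t) 0) ^ 2 ∂μ) ^ ((1/2 : ℝ)))) ≤
      m + v * α ^ ((1/2 : ℝ)) * (1 - α) ^ (-(1/2 : ℝ)) := by
  obtain ⟨hα0, hα1⟩ := hα
  rw [Real.rpow_neg (by linarith)]
  simp_rw [← Real.sqrt_eq_rpow]
  have hc : 1 ≤ (√(1 - α))⁻¹ :=
    (one_le_inv₀ (Real.sqrt_pos.2 (by linarith))).2 (Real.sqrt_le_one.2 (by linarith))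
  have hbdd : BddBelow (Set.range fun t ↦
      t + (√(1 - α))⁻¹ * √(∫ ω, max (X ω - t) 0 ^ 2 ∂μ)) := by
    refine ⟨m, ?_⟩
    rintro _ ⟨t, rfl⟩
    have := sub_le_sqrt_integral_max_sub_sq hX hm t
    nlinarith [Real.sqrt_nonneg (∫ ω, max (X ω - t) 0 ^ 2 ∂μ)]
  refine le_of_forall_pos_le_add fun ε hε ↦ ?_
  obtain ⟨t, ht⟩ := Real.exists_add_inv_sqrt_mul_sqrt_sq_add_sq_le m hv hα0 hα1 hε
  calc _ ≤ t + (√(1 - α))⁻¹ * √(∫ ω, max (X ω - t) 0 ^ 2 ∂μ) := ciInf_le hbdd t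
    _ ≤ t + (√(1 - α))⁻¹ * √(v ^ 2 + (m - t) ^ 2) := by
        gcongr
        linarith [integral_max_sub_sq_le hX hm t]
    _ ≤ _ := ht
end

section
/- Let p ≥ 1, α ∈ [0,1), and X ∈ L^p with essSup X = M < ∞. Then EVaR_α^p(X) := inf_{t ∈ ℝ}{ t + (1/(1-α))^{1/p} ‖(X-t)⁺‖_p } ≤ M, with equality EVaR_α^p(X) → M as α → 1 in the sense that sup_{α ∈ [0,1)} EVaR_α^p(X) = M when X is bounded above. -/
/-!
For `t = M` the penalty term vanishes, since `(X - M)⁺ = 0` almost surely, so `EVaR ≤ M`; the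
infimum is bounded below because, by `‖·‖₁ ≤ ‖·‖_p` on a probability space, every value of the objective
is at least `𝔼[X]`. Conversely, for `L < M` the tail event `{L ≤ X}` has probability `q > 0`, and
Markov's inequality gives `‖(X - t)⁺‖_p ≥ q^{1/p} (L - t)` for `t < L`. At the level `α = 1 - q`
the factor `(1 - α)^{-1/p}` cancels `q^{1/p}`, so every value of the objective is at least `L`.
-/

open MeasureTheory
open scoped ENNReal

section

variable {Ω : Type*} [MeasurableSpace Ω] {μ : Measure Ω} {p : ℝ} {X : Ω → ℝ}

lemma MeasureTheory.MemLp.integrable_rpow_max_sub_zero [IsFiniteMeasure μ] (hp : 0 < p)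
    (hX : MemLp X (ENNReal.ofReal p) μ) (t : ℝ) :
    Integrable (fun ω => (max (X ω - t) 0) ^ p) μ := by
  refine ((hX.sub (memLp_const t)).pos_part.integrable_norm_rpow (by simpa using hp)
    ENNReal.ofReal_ne_top).congr (.of_forall fun ω => ?_)
  simp [Real.norm_of_nonneg (le_max_right (X ω - t) 0), ENNReal.toReal_ofReal hp.le]

lemma integral_le_integral_rpow_rpow_one_div [IsProbabilityMeasure μ] (hp : 1 ≤ p)
    {g : Ω → ℝ} (hg : 0 ≤ g) (hmem : MemLp g (ENNReal.ofReal p) μ) :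
    ∫ ω, g ω ∂μ ≤ (∫ ω, g ω ^ p ∂μ) ^ (1 / p) := by
  have hp0 : 0 < p := by linarith
  have h1p : (1 : ℝ≥0∞) ≤ ENNReal.ofReal p := by simpa using ENNReal.one_le_ofReal.mpr hp
  have hle := eLpNorm_le_eLpNorm_of_exponent_le h1p hmem.aestronglyMeasurable (μ := μ)
  rw [(hmem.mono_exponent h1p).eLpNorm_eq_integral_rpow_norm one_ne_zero ENNReal.one_ne_top,
    hmem.eLpNorm_eq_integral_rpow_norm (by simpa using hp0) ENNReal.ofReal_ne_top,
    ENNReal.ofReal_le_ofReal_iff (by positivity)] at hle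
  have hnorm : ∀ ω, ‖g ω‖ = g ω := fun ω => Real.norm_of_nonneg (hg ω)
  simpa [hnorm, ENNReal.toReal_ofReal hp0.le, one_div] using hle

lemma integral_le_EVaR_objective [IsProbabilityMeasure μ] (hp : 1 ≤ p) {α : ℝ}
    (hα : α ∈ Set.Ico (0 : ℝ) 1) (hX : MemLp X (ENNReal.ofReal p) μ) (t : ℝ) :
    ∫ ω, X ω ∂μ ≤ t + (1 / (1 - α)) ^ (1 / p) * (∫ ω, (max (X ω - t) 0) ^ p ∂μ) ^ (1 / p) := by
  have h1p : (1 : ℝ≥0∞) ≤ ENNReal.ofReal p := by simpa using ENNReal.one_le_ofReal.mpr hp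
  have hXt := hX.sub (memLp_const t)
  have hc : 1 ≤ (1 / (1 - α)) ^ (1 / p) :=
    Real.one_le_rpow (by rw [le_div_iff₀ (by linarith [hα.2])]; linarith [hα.1]) (by positivity)
  calc ∫ ω, X ω ∂μ = t + ∫ ω, (X ω - t) ∂μ := by
        rw [integral_sub (hX.integrable h1p) (integrable_const t)]; simp
    _ ≤ t + ∫ ω, max (X ω - t) 0 ∂μ := by
        exact add_le_add_right (integral_mono (hXt.integrable h1p)
          (hXt.pos_part.integrable h1p) fun ω => le_max_left _ _) t
    _ ≤ t + (∫ ω, (max (X ω - t) 0) ^ p ∂μ) ^ (1 / p) := by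
        gcongr
        exact integral_le_integral_rpow_rpow_one_div hp (fun ω => le_max_right _ _) hXt.pos_part
    _ ≤ _ := by
        gcongr
        exact le_mul_of_one_le_left
          (Real.rpow_nonneg (integral_nonneg fun ω => by positivity) _) hc

lemma EVaR_le_of_ae_le [IsProbabilityMeasure μ] (hp : 1 ≤ p) {α : ℝ}
    (hα : α ∈ Set.Ico (0 : ℝ) 1) (hX : MemLp X (ENNReal.ofReal p) μ) {M : ℝ}
    (hXM : ∀ᵐ ω ∂μ, X ω ≤ M) : EVaR μ p α X ≤ M := by
  have hzero : ∫ ω, (max (X ω - M) 0) ^ p ∂μ = 0 := by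
    refine integral_eq_zero_of_ae ?_
    filter_upwards [hXM] with ω hω
    simp [max_eq_right (sub_nonpos.2 hω), Real.zero_rpow (by linarith : p ≠ 0)]
  calc EVaR μ p α X
      ≤ M + (1 / (1 - α)) ^ (1 / p) * (∫ ω, (max (X ω - M) 0) ^ p ∂μ) ^ (1 / p) :=
        ciInf_le ⟨_, Set.forall_mem_range.2 (integral_le_EVaR_objective hp hα hX)⟩ M
    _ = M := by
        rw [hzero, Real.zero_rpow (by positivity), mul_zero, add_zero]

lemma rpow_sub_mul_measureReal_le_integral [IsFiniteMeasure μ] (hp : 0 < p)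
    (hX : MemLp X (ENNReal.ofReal p) μ) {L t : ℝ} (htL : t ≤ L) :
    (L - t) ^ p * μ.real {ω | L ≤ X ω} ≤ ∫ ω, (max (X ω - t) 0) ^ p ∂μ := by
  calc (L - t) ^ p * μ.real {ω | L ≤ X ω}
      ≤ (L - t) ^ p * μ.real {ω | (L - t) ^ p ≤ (max (X ω - t) 0) ^ p} := by
        refine mul_le_mul_of_nonneg_left (measureReal_mono fun ω (hω : L ≤ X ω) => ?_)
          (by positivity)
        exact Real.rpow_le_rpow (sub_nonneg.2 htL) (le_max_of_le_left (by linarith)) hp.le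
    _ ≤ _ := mul_meas_ge_le_integral_of_nonneg (.of_forall fun ω => by positivity)
        (hX.integrable_rpow_max_sub_zero hp t) _

lemma le_EVaR_one_sub_measureReal [IsFiniteMeasure μ] (hp : 0 < p)
    (hX : MemLp X (ENNReal.ofReal p) μ) {L : ℝ} (hL : 0 < μ.real {ω | L ≤ X ω}) :
    L ≤ EVaR μ p (1 - μ.real {ω | L ≤ X ω}) X := by
  refine le_ciInf fun t => ?_
  rw [sub_sub_cancel]
  have hI : 0 ≤ ∫ ω, (max (X ω - t) 0) ^ p ∂μ := integral_nonneg fun ω => by positivity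
  rcases le_or_gt L t with hLt | htL
  · have : 0 ≤ (1 / μ.real {ω | L ≤ X ω}) ^ (1 / p) * (∫ ω, (max (X ω - t) 0) ^ p ∂μ) ^ (1 / p) := by
      positivity
    linarith
  · suffices L - t ≤ (1 / μ.real {ω | L ≤ X ω}) ^ (1 / p) *
        (∫ ω, (max (X ω - t) 0) ^ p ∂μ) ^ (1 / p) by linarith
    rw [← Real.mul_rpow (by positivity) hI]
    calc L - t = ((L - t) ^ p) ^ (1 / p) := by
          rw [← Real.rpow_mul (by linarith), mul_one_div_cancel hp.ne', Real.rpow_one]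
      _ ≤ _ := by
          gcongr
          rw [one_div_mul_eq_div, le_div_iff₀ hL]
          exact rpow_sub_mul_measureReal_le_integral hp hX htL.le

lemma measure_setOf_le_ne_zero_of_lt_essSup {L : ℝ}
    (hL : (L : EReal) < essSup (fun ω => (X ω : EReal)) μ) : μ {ω | L ≤ X ω} ≠ 0 := by
  intro h0
  refine hL.not_ge (essSup_le_of_ae_le _ ?_)
  filter_upwards [measure_eq_zero_iff_ae_notMem.1 h0] with ω (hω : ¬ L ≤ X ω)
  exact EReal.coe_le_coe_iff.2 (not_le.1 hω).le

end

theorem stmt_16 {Ω : Type*} [MeasurableSpace Ω] (μ : Measure Ω) [IsProbabilityMeasure μ]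
    (p : ℝ) (hp : 1 ≤ p) (α : ℝ) (hα : α ∈ Set.Ico (0:ℝ) 1)
    (X : Ω → ℝ) (hX : MemLp X (ENNReal.ofReal p) μ)
    (M : ℝ) (hM : essSup (fun ω => ((X ω : ℝ) : EReal)) μ = (M : EReal)) :
    EVaR μ p α X ≤ M ∧ sSup ((fun a => EVaR μ p a X) '' Set.Ico (0:ℝ) 1) = M := by
  have hXM : ∀ᵐ ω ∂μ, X ω ≤ M := by
    filter_upwards [ae_le_essSup (f := fun ω => (X ω : EReal)) (μ := μ)] with ω hω
    exact EReal.coe_le_coe_iff.1 (hM ▸ hω)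
  have hub : ∀ a ∈ Set.Ico (0:ℝ) 1, EVaR μ p a X ≤ M := fun a ha => EVaR_le_of_ae_le hp ha hX hXM
  refine ⟨hub α hα, le_antisymm (csSup_le ⟨_, α, hα, rfl⟩ (Set.forall_mem_image.2 hub)) ?_⟩
  refine le_of_forall_sub_le fun ε hε => ?_
  have htail : 0 < μ.real {ω | M - ε ≤ X ω} := by
    refine ENNReal.toReal_pos (measure_setOf_le_ne_zero_of_lt_essSup ?_) (measure_ne_top _ _)
    rw [hM]
    exact EReal.coe_lt_coe_iff.2 (by linarith)
  calc M - ε ≤ EVaR μ p (1 - μ.real {ω | M - ε ≤ X ω}) X :=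
        le_EVaR_one_sub_measureReal (by linarith) hX htail
    _ ≤ _ := le_csSup ⟨M, Set.forall_mem_image.2 hub⟩
        ⟨_, ⟨by linarith [measureReal_le_one (μ := μ) (s := {ω | M - ε ≤ X ω})], by linarith⟩, rfl⟩
end
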